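/- For integers m, n > 1 (with n ≥ 3), the sparing number of the (m,n)-cone C_n + K̄_m is n. -/

import Mathlib

open Pointwise

/-- The induced set-label on (potential) edges: the sumset of the end-vertex labels. -/
def edgeLabel {V : Type*} (f : V → Finset ℕ) : Sym2 V → Finset ℕ :=
  Sym2.lift ⟨fun u v => f u + f v, fun u v => add_comm (f u) (f v)⟩

/-- An integer additive set-indexer (IASI) of a simple graph `G`: an injective assignment
of nonempty finite sets of non-negative integers to the vertices such that the induced
sumset-labeling of the edges is also injective. -/
structure IsIASI {V : Type*} (G : SimpleGraph V) (f : V → Finset ℕ) : Prop where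
  nonempty : ∀ v, (f v).Nonempty
  inj : Function.Injective f
  edgeInj : Set.InjOn (edgeLabel f) G.edgeSet

/-- A weak IASI: an IASI for which every edge label has cardinality equal to the maximum of
the cardinalities of the labels of its end vertices. -/
structure IsWeakIASI {V : Type*} (G : SimpleGraph V) (f : V → Finset ℕ) extends
    IsIASI G f : Prop where
  weak : ∀ ⦃u v⦄, G.Adj u v → (f u + f v).card = max (f u).card (f v).card

/-- The number of mono-indexed edges of `G` under the labeling `f`, i.e. the number of
edges whose set-label is a singleton. -/
noncomputable def monoEdgeCount {V : Type*} (G : SimpleGraph V) (f : V → Finset ℕ) : ℕ :=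
  {e ∈ G.edgeSet | (edgeLabel f e).card = 1}.ncard

/-- The sparing number of `G`: the minimum number of mono-indexed edges taken over all
weak IASIs of `G`. -/
noncomputable def sparingNumber {V : Type*} (G : SimpleGraph V) : ℕ :=
  sInf {k | ∃ f : V → Finset ℕ, IsWeakIASI G f ∧ monoEdgeCount G f = k}

/-- The join `G + H` of two graphs on disjoint vertex sets: all vertices and edges of
`G` and `H`, together with every edge joining a vertex of `G` to a vertex of `H`. -/
def graphJoin {V W : Type*} (G : SimpleGraph V) (H : SimpleGraph W) :
    SimpleGraph (V ⊕ W) where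
  Adj x y :=
    match x, y with
    | Sum.inl a, Sum.inl b => G.Adj a b
    | Sum.inr a, Sum.inr b => H.Adj a b
    | Sum.inl _, Sum.inr _ => True
    | Sum.inr _, Sum.inl _ => True
  symm := ⟨by
    rintro (a | a) (b | b) h
    · exact G.adj_symm h
    · trivial
    · trivial
    · exact H.adj_symm h⟩
  loopless := ⟨by
    rintro (a | a) h
    · exact G.irrefl h
    · exact H.irrefl h⟩

/-!
By Cauchy–Davenport, `|A + B| ≥ |A| + |B| - 1 > max |A| |B|` when both labels have at least two
elements, so in a weak IASI the mono-indexed vertices form a vertex cover `S`, and the mono-indexed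
edges are exactly the edges inside `S`. If `S` contains the whole cycle, its `n` edges lie inside
`S`. Otherwise some cycle vertex is outside `S`, so all `m ≥ 2` apex vertices are in `S`; as a
vertex cover of `C_n`, `S` contains at least `n / 2` cycle vertices, each joined to every apex
vertex, which gives at least `m · n / 2 ≥ n` edges inside `S`. The bound is attained by labelling
the cycle vertices with singletons and the apex vertices with two-element sets.
-/

open SimpleGraph

namespace Finset

theorem card_eq_one_or_card_eq_one_of_card_add_eq_max {α : Type*} [LinearOrder α] [Add α]
    [IsCancelAdd α] [AddLeftMono α] [AddRightMono α] {s t : Finset α} (hs : s.Nonempty)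
    (ht : t.Nonempty) (h : #(s + t) = max #s #t) : #s = 1 ∨ #t = 1 := by
  have := cauchy_davenport_add_of_linearOrder_isCancelAdd hs ht
  have := hs.card_pos
  have := ht.card_pos
  omega

theorem card_singleton_add_eq_max {α : Type*} [Add α] [IsLeftCancelAdd α] [DecidableEq α]
    (a : α) {t : Finset α} (ht : t.Nonempty) : #({a} + t) = max #{a} #t := by
  rw [card_singleton_add, card_singleton, max_eq_right ht.card_pos]

theorem eq_and_eq_of_singleton_add_eq_singleton_add {α : Type*} [AddCommMonoid α]
    [PartialOrder α] [CanonicallyOrderedAdd α] [IsLeftCancelAdd α] [DecidableEq α]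
    {a b : α} {s t : Finset α} (hs : 0 ∈ s) (ht : 0 ∈ t) (h : {a} + s = {b} + t) :
    a = b ∧ s = t := by
  have hab : ∀ {a b : α} {s t : Finset α}, 0 ∈ s → {a} + s = {b} + t → b ≤ a := by
    intro a b s t hs h
    have : a + 0 ∈ {b} + t := h ▸ add_mem_add (mem_singleton_self a) hs
    obtain ⟨x, -, rfl⟩ : ∃ x ∈ t, b + x = a := by simpa [mem_add] using this
    exact le_self_add
  obtain rfl := le_antisymm (hab ht h.symm) (hab hs h)
  refine ⟨rfl, ?_⟩
  ext x
  simpa [mem_add] using congrArg (a + x ∈ ·) h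

end Finset

theorem Sym2.mk_eq_mk_of_two_pow_add_two_pow_eq {a b c d : ℕ} (hab : a ≠ b) (hcd : c ≠ d)
    (h : 2 ^ a + 2 ^ b = 2 ^ c + 2 ^ d) : s(a, b) = s(c, d) := by
  have : ({a, b} : Finset ℕ) = {c, d} := by
    apply Finset.geomSum_injective le_rfl
    simpa only [Finset.sum_pair hab, Finset.sum_pair hcd] using h
  rw [Sym2.eq_iff, ← Set.pair_eq_pair_iff, ← Finset.coe_pair, ← Finset.coe_pair, this]

namespace IsWeakIASI

variable {V : Type*} {G : SimpleGraph V} {f : V → Finset ℕ}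

theorem isVertexCover (hf : IsWeakIASI G f) : G.IsVertexCover {v | (f v).card = 1} :=
  fun u v huv ↦ Finset.card_eq_one_or_card_eq_one_of_card_add_eq_max (hf.nonempty u)
    (hf.nonempty v) (hf.weak huv)

theorem card_edgeLabel_eq_one_iff (hf : IsWeakIASI G f) {u v : V} (huv : G.Adj u v) :
    (edgeLabel f s(u, v)).card = 1 ↔ (f u).card = 1 ∧ (f v).card = 1 := by
  have hu := (hf.nonempty u).card_pos
  have hv := (hf.nonempty v).card_pos
  change (f u + f v).card = 1 ↔ _
  rw [hf.weak huv]
  omega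

theorem monoEdgeCount_eq_ncard_edgeSet_inter_sym2 (hf : IsWeakIASI G f) :
    monoEdgeCount G f = (G.edgeSet ∩ {v | (f v).card = 1}.sym2).ncard := by
  unfold monoEdgeCount
  congr 1
  ext e
  induction e using Sym2.ind with
  | _ u v =>
    simp only [Set.mem_inter_iff, Set.mk_mem_sym2_iff, mem_edgeSet]
    exact and_congr_right hf.card_edgeLabel_eq_one_iff

end IsWeakIASI

theorem Set.sym2_mono {α : Type*} {s t : Set α} (h : s ⊆ t) : s.sym2 ⊆ t.sym2 :=
  fun _ he ↦ mem_sym2_iff_subset.2 ((mem_sym2_iff_subset.1 he).trans h)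

section graphJoin

variable {V W : Type*} {G : SimpleGraph V} {H : SimpleGraph W}

variable (G H) in
def graphJoin.inlHom : G →g graphJoin G H :=
  ⟨Sum.inl, fun h ↦ h⟩

theorem graphJoin_edgeSet_inter_sym2_range_inl :
    (graphJoin G H).edgeSet ∩ (Set.range Sum.inl).sym2 = Sym2.map Sum.inl '' G.edgeSet := by
  ext e
  induction e using Sym2.ind with
  | _ x y =>
    constructor
    · rintro ⟨hxy, ⟨a, rfl⟩, ⟨b, rfl⟩⟩
      exact ⟨s(a, b), hxy, rfl⟩
    · rintro ⟨e, he, hxy⟩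
      induction e using Sym2.ind with
      | _ a b =>
        rw [Sym2.map_mk] at hxy
        rw [← hxy]
        exact ⟨he, ⟨a, rfl⟩, ⟨b, rfl⟩⟩

theorem ncard_edgeSet_le_ncard_graphJoin_edgeSet_inter_sym2 [Finite V] [Finite W]
    {S : Set (V ⊕ W)} (hS : Set.range Sum.inl ⊆ S) :
    G.edgeSet.ncard ≤ ((graphJoin G H).edgeSet ∩ S.sym2).ncard := by
  rw [← Set.ncard_image_of_injective _ (Sym2.map.injective Sum.inl_injective),
    ← graphJoin_edgeSet_inter_sym2_range_inl (H := H)]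
  exact Set.ncard_le_ncard (Set.inter_subset_inter_right _ (Set.sym2_mono hS))

theorem ncard_mul_card_le_ncard_graphJoin_edgeSet_inter_sym2 [Finite V] [Finite W]
    {S : Set (V ⊕ W)} (hS : Set.range Sum.inr ⊆ S) :
    (Sum.inl ⁻¹' S).ncard * Nat.card W ≤ ((graphJoin G H).edgeSet ∩ S.sym2).ncard := by
  rw [← Set.ncard_univ, ← Set.ncard_prod]
  refine Set.ncard_le_ncard_of_injOn (fun p ↦ s(Sum.inl p.1, Sum.inr p.2)) ?_ ?_
  · rintro ⟨a, b⟩ ⟨ha, -⟩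
    exact ⟨trivial, ha, hS ⟨b, rfl⟩⟩
  · rintro ⟨a, b⟩ - ⟨c, d⟩ - h
    simpa using h

theorem exists_of_mem_edgeSet_graphJoin_bot {e : Sym2 (V ⊕ W)}
    (he : e ∈ (graphJoin G (⊥ : SimpleGraph W)).edgeSet) :
    (∃ a b, G.Adj a b ∧ e = s(Sum.inl a, Sum.inl b)) ∨ ∃ a b, e = s(Sum.inl a, Sum.inr b) := by
  induction e using Sym2.ind with
  | _ x y =>
    rcases x with a | a <;> rcases y with b | b
    · exact .inl ⟨a, b, he, rfl⟩
    · exact .inr ⟨a, b, rfl⟩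
    · exact .inr ⟨b, a, Sym2.eq_swap⟩
    · exact he.elim

end graphJoin

theorem SimpleGraph.cycleGraph_adj_finRotate {n : ℕ} (hn : 2 ≤ n) (i : Fin n) :
    (cycleGraph n).Adj i (finRotate n i) := by
  obtain ⟨n, rfl⟩ := Nat.exists_eq_add_of_le' hn
  rw [finRotate_apply]
  exact cycleGraph_adj.2 (.inr (add_sub_cancel_left i 1))

theorem SimpleGraph.IsVertexCover.le_two_mul_ncard_of_cycleGraph {n : ℕ} (hn : 2 ≤ n)
    {T : Set (Fin n)} (hT : (cycleGraph n).IsVertexCover T) : n ≤ 2 * T.ncard := by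
  have hcompl : Tᶜ.ncard ≤ T.ncard :=
    Set.ncard_le_ncard_of_injOn (finRotate n)
      (fun i hi ↦ (hT (cycleGraph_adj_finRotate hn i)).resolve_left hi)
      (finRotate n).injective.injOn
  have := Set.ncard_add_ncard_compl T
  rw [Nat.card_eq_fintype_card, Fintype.card_fin] at this
  omega

theorem SimpleGraph.ncard_edgeSet_cycleGraph {n : ℕ} (hn : 3 ≤ n) :
    (cycleGraph n).edgeSet.ncard = n := by
  obtain ⟨n, rfl⟩ := Nat.exists_eq_add_of_le' hn
  have := sum_degrees_eq_twice_card_edges (cycleGraph (n + 3))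
  simp only [cycleGraph_degree_three_le, Finset.sum_const, Finset.card_univ, Fintype.card_fin,
    smul_eq_mul] at this
  rw [← coe_edgeFinset, Set.ncard_coe_finset]
  omega

abbrev coneGraph (m n : ℕ) : SimpleGraph (Fin n ⊕ Fin m) :=
  graphJoin (cycleGraph n) ⊥

theorem SimpleGraph.IsVertexCover.le_ncard_coneGraph_edgeSet_inter_sym2 {m n : ℕ} (hm : 1 < m)
    (hn : 3 ≤ n) {S : Set (Fin n ⊕ Fin m)} (hS : (coneGraph m n).IsVertexCover S) :
    n ≤ ((coneGraph m n).edgeSet ∩ S.sym2).ncard := by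
  by_cases hcycle : Set.range Sum.inl ⊆ S
  · calc n = (cycleGraph n).edgeSet.ncard := (ncard_edgeSet_cycleGraph hn).symm
      _ ≤ _ := ncard_edgeSet_le_ncard_graphJoin_edgeSet_inter_sym2 hcycle
  · obtain ⟨_, ⟨i, rfl⟩, hi⟩ := Set.not_subset.1 hcycle
    have hapex : Set.range Sum.inr ⊆ S := by
      rintro _ ⟨j, rfl⟩
      exact (hS (show (coneGraph m n).Adj (Sum.inl i) (Sum.inr j) from trivial)).resolve_left hi
    calc n ≤ 2 * (Sum.inl ⁻¹' S).ncard :=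
          (hS.preimage (graphJoin.inlHom _ _)).le_two_mul_ncard_of_cycleGraph (by omega)
      _ ≤ (Sum.inl ⁻¹' S).ncard * Nat.card (Fin m) := by
          rw [Nat.card_fin, mul_comm]
          exact Nat.mul_le_mul_left _ hm
      _ ≤ _ := ncard_mul_card_le_ncard_graphJoin_edgeSet_inter_sym2 hapex

/-- Powers of two make the sum of two distinct cycle labels determine the pair, and the `0` in
every apex label makes the label `{2 ^ i, 2 ^ i + j + 1}` of a spoke determine both its ends. -/
def coneLabel (n m : ℕ) : Fin n ⊕ Fin m → Finset ℕ :=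
  Sum.elim (fun i ↦ {2 ^ (i : ℕ)}) (fun j ↦ {0, (j : ℕ) + 1})

section coneLabel

variable {n m : ℕ}

theorem card_coneLabel_inl (i : Fin n) : (coneLabel n m (Sum.inl i)).card = 1 :=
  Finset.card_singleton _

theorem card_coneLabel_inr (j : Fin m) : (coneLabel n m (Sum.inr j)).card = 2 :=
  Finset.card_pair (Nat.succ_ne_zero _).symm

theorem coneLabel_injective : Function.Injective (coneLabel n m) := by
  rintro (i | j) (i' | j') h
  · have := Nat.pow_right_injective le_rfl (Finset.singleton_injective h)
    rw [Fin.val_injective this]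
  · simpa [card_coneLabel_inl, card_coneLabel_inr] using congrArg Finset.card h
  · simpa [card_coneLabel_inl, card_coneLabel_inr] using congrArg Finset.card h.symm
  · have : (j : ℕ) + 1 ∈ coneLabel n m (Sum.inr j') := h ▸ by simp [coneLabel]
    simp only [coneLabel, Sum.elim_inr, Finset.mem_insert, Finset.mem_singleton] at this
    rw [Fin.val_injective (by omega : (j : ℕ) = j')]

theorem setOf_card_coneLabel_eq_one : {v | (coneLabel n m v).card = 1} = Set.range Sum.inl := by
  ext (i | j)
  · simp [coneLabel]
  · simp [card_coneLabel_inr]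

theorem edgeLabel_coneLabel_inl_inl (a b : Fin n) :
    edgeLabel (coneLabel n m) s(Sum.inl a, Sum.inl b) = {2 ^ (a : ℕ) + 2 ^ (b : ℕ)} :=
  Finset.singleton_add_singleton _ _

theorem card_edgeLabel_coneLabel_inl_inr (a : Fin n) (j : Fin m) :
    (edgeLabel (coneLabel n m) s(Sum.inl a, Sum.inr j)).card = 2 :=
  (Finset.card_singleton_add _ _).trans (card_coneLabel_inr j)

theorem isWeakIASI_coneLabel (G : SimpleGraph (Fin n)) :
    IsWeakIASI (graphJoin G (⊥ : SimpleGraph (Fin m))) (coneLabel n m) := by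
  have hweak : ∀ (i : Fin n) (v : Fin n ⊕ Fin m),
      (coneLabel n m (Sum.inl i) + coneLabel n m v).card =
        max (coneLabel n m (Sum.inl i)).card (coneLabel n m v).card :=
    fun i v ↦ Finset.card_singleton_add_eq_max _ (by cases v <;> simp [coneLabel])
  refine ⟨⟨fun v ↦ by cases v <;> simp [coneLabel], coneLabel_injective, ?_⟩, ?_⟩
  · intro e₁ he₁ e₂ he₂ h
    rcases exists_of_mem_edgeSet_graphJoin_bot he₁ with ⟨a, b, hab, rfl⟩ | ⟨a, j, rfl⟩ <;>
      rcases exists_of_mem_edgeSet_graphJoin_bot he₂ with ⟨c, d, hcd, rfl⟩ | ⟨c, k, rfl⟩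
    · rw [edgeLabel_coneLabel_inl_inl, edgeLabel_coneLabel_inl_inl, Finset.singleton_inj] at h
      simpa [Sym2.eq_iff, Fin.ext_iff] using Sym2.mk_eq_mk_of_two_pow_add_two_pow_eq
        (Fin.val_injective.ne hab.ne) (Fin.val_injective.ne hcd.ne) h
    · simpa [edgeLabel_coneLabel_inl_inl, card_edgeLabel_coneLabel_inl_inr]
        using congrArg Finset.card h
    · simpa [edgeLabel_coneLabel_inl_inl, card_edgeLabel_coneLabel_inl_inr]
        using congrArg Finset.card h.symm
    · obtain ⟨hac, hjk⟩ := Finset.eq_and_eq_of_singleton_add_eq_singleton_add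
        (by simp [coneLabel]) (by simp [coneLabel]) h
      rw [Fin.val_injective (Nat.pow_right_injective le_rfl hac),
        Sum.inr_injective (coneLabel_injective hjk)]
  · rintro (i | j) (i' | j') h
    · exact hweak i _
    · exact hweak i _
    · rw [add_comm, max_comm]
      exact hweak i' _
    · exact h.elim

end coneLabel

/-- For integers `m, n > 1` with `n ≥ 3`, the sparing number of the `(m,n)`-cone
`C_n + K̄_m` is `n`. -/
theorem cone_sparingNumber (m n : ℕ) (hm : 1 < m) (hn : 3 ≤ n) :
    sparingNumber
      (graphJoin (SimpleGraph.cycleGraph n) (⊥ : SimpleGraph (Fin m))) = n := by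
  have hf₀ : IsWeakIASI (coneGraph m n) (coneLabel n m) := isWeakIASI_coneLabel _
  refine IsLeast.csInf_eq ⟨⟨coneLabel n m, hf₀, ?_⟩, ?_⟩
  · rw [hf₀.monoEdgeCount_eq_ncard_edgeSet_inter_sym2, setOf_card_coneLabel_eq_one,
      graphJoin_edgeSet_inter_sym2_range_inl,
      Set.ncard_image_of_injective _ (Sym2.map.injective Sum.inl_injective),
      ncard_edgeSet_cycleGraph hn]
  · rintro _ ⟨f, hf, rfl⟩
    rw [hf.monoEdgeCount_eq_ncard_edgeSet_inter_sym2]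
    exact hf.isVertexCover.le_ncard_coneGraph_edgeSet_inter_sym2 hm hn
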